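/- arXiv:1701.04118 — 2 statements merged into one kernel-verified Lean document; each statement's English description precedes it below -/
import Mathlib

section
/- Let A₁,…,Aₘ ∈ 𝕊ⁿ. The set {X ∈ 𝕊₊ⁿ : Tr(Aᵢ X) = 0 for all i = 1,…,m} equals {0} if and only if the linear span of A₁,…,Aₘ contains a positive definite matrix. -/
/-!
If `P = ∑ tᵢ Aᵢ` is positive definite and `X ⪰ 0` annihilates every `Aᵢ`, write `X = ∑ vₖ vₖᵀ`;
then `0 = Tr(P X) = ∑ vₖᵀ P vₖ` forces every `vₖ = 0`. Conversely, if the span `V` of the `Aᵢ`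
contains no positive definite matrix, it misses the open convex cone of (not necessarily
symmetric) matrices with positive quadratic form. A separating functional `f` vanishes on `V`
and is negative on the cone, hence `f(xxᵀ) ≤ 0` and `f 1 < 0`. Representing `-f` as
`M ↦ Tr(M Y)` and symmetrizing `Y` gives a positive semidefinite `X ≠ 0` with `Tr(Aᵢ X) = 0`.
-/

open Matrix

namespace Matrix

variable {ι : Type*} [Fintype ι]

lemma trace_mul_vecMulVec_self {R : Type*} [CommSemiring R] (M : Matrix ι ι R) (x : ι → R) :
    (M * vecMulVec x x).trace = x ⬝ᵥ M *ᵥ x := by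
  rw [mul_vecMulVec, trace_vecMulVec, dotProduct_comm]

lemma trace_mul_transpose_of_isSymm {R : Type*} [CommSemiring R] {M : Matrix ι ι R}
    (hM : M.IsSymm) (Y : Matrix ι ι R) : (M * Yᵀ).trace = (M * Y).trace := by
  rw [← trace_transpose, transpose_mul, transpose_transpose, hM.eq, trace_mul_comm]

lemma exists_trace_mul_eq [DecidableEq ι] {R : Type*} [CommSemiring R]
    (f : Matrix ι ι R →ₗ[R] R) :
    ∃ Y : Matrix ι ι R, ∀ M, f M = (M * Y).trace := by
  refine ⟨of fun i j => f (single j i 1), fun M => ?_⟩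
  induction M using Matrix.induction_on' with
  | h_zero => simp
  | h_add p q hp hq => rw [map_add, hp, hq, add_mul, trace_add]
  | h_std_basis i j x =>
    rw [trace_single_mul, of_apply, ← map_smul, smul_single, smul_eq_mul, mul_one]

lemma PosSemidef.eq_zero_of_trace_mul_eq_zero {P X : Matrix ι ι ℝ} (hP : P.PosDef)
    (hX : X.PosSemidef) (h : (P * X).trace = 0) : X = 0 := by
  obtain ⟨k, v, rfl⟩ := posSemidef_iff_eq_sum_vecMulVec.mp hX
  simp only [star_trivial, Finset.mul_sum, trace_sum, trace_mul_vecMulVec_self] at h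
  have hv : ∀ i, v i = 0 := fun i => by
    by_contra hvi
    have hpos := hP.dotProduct_mulVec_pos hvi
    rw [star_trivial] at hpos
    exact hpos.ne' ((Finset.sum_eq_zero_iff_of_nonneg fun j _ => by
      simpa using hP.posSemidef.dotProduct_mulVec_nonneg (v j)).mp h i (Finset.mem_univ i))
  simp [hv]

variable (ι) in
/-- Unlike `Matrix.PosDef`, membership does not require symmetry, so that this cone is open
in the space of all matrices. -/
def posDefCone : Set (Matrix ι ι ℝ) :=
  {M | ∀ x ≠ 0, 0 < x ⬝ᵥ M *ᵥ x}

lemma posDef_of_mem_posDefCone {M : Matrix ι ι ℝ} (hM : M.IsSymm) (h : M ∈ posDefCone ι) :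
    M.PosDef :=
  .of_dotProduct_mulVec_pos (isHermitian_iff_isSymm.mpr hM) fun x hx => by
    simpa using h x hx

lemma PosSemidef.add_smul_one_mem_posDefCone [DecidableEq ι] {N : Matrix ι ι ℝ}
    (hN : N.PosSemidef) {ε : ℝ} (hε : 0 < ε) : N + ε • 1 ∈ posDefCone ι := fun x hx => by
  have hN' : 0 ≤ x ⬝ᵥ N *ᵥ x := by simpa using hN.dotProduct_mulVec_nonneg x
  have hx' : 0 < x ⬝ᵥ x := by simpa using dotProduct_star_self_pos_iff.mpr hx
  simp only [add_mulVec, smul_mulVec, one_mulVec, dotProduct_add, dotProduct_smul, smul_eq_mul]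
  positivity

lemma convex_posDefCone : Convex ℝ (posDefCone ι) := by
  intro M hM N hN a b ha hb hab x hx
  simp only [add_mulVec, smul_mulVec, dotProduct_add, dotProduct_smul, smul_eq_mul]
  rcases ha.eq_or_lt with rfl | ha
  · simpa [show b = 1 by linarith] using hN x hx
  · exact add_pos_of_pos_of_nonneg (mul_pos ha (hM x hx)) (mul_nonneg hb (hN x hx).le)

lemma isOpen_posDefCone : IsOpen (posDefCone ι) := by
  have hsphere : posDefCone ι =
      {M | ∀ y ∈ Metric.sphere (0 : ι → ℝ) 1, 0 < y ⬝ᵥ M *ᵥ y} := by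
    ext M
    refine ⟨fun h y hy => h y (ne_zero_of_mem_unit_sphere ⟨y, hy⟩), fun h x hx => ?_⟩
    have hnx : ‖x‖ ≠ 0 := norm_ne_zero_iff.mpr hx
    have hscale : (‖x‖⁻¹ • x) ⬝ᵥ M *ᵥ (‖x‖⁻¹ • x) = ‖x‖⁻¹ ^ 2 * (x ⬝ᵥ M *ᵥ x) := by
      simp only [mulVec_smul, smul_dotProduct, dotProduct_smul, smul_eq_mul]
      ring
    have hy := h (‖x‖⁻¹ • x) (by simp [norm_smul, hnx])
    rw [hscale] at hy
    exact pos_of_mul_pos_right hy (by positivity)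
  have hcont : Continuous fun p : Matrix ι ι ℝ × (ι → ℝ) => p.2 ⬝ᵥ p.1 *ᵥ p.2 :=
    continuous_snd.dotProduct (continuous_fst.matrix_mulVec continuous_snd)
  rw [hsphere, isOpen_iff_mem_nhds]
  exact fun M hM => (isCompact_sphere 0 1).eventually_forall_of_forall_eventually fun y hy =>
    (hcont.tendsto (M, y)).eventually (eventually_gt_nhds (hM y hy))

lemma exists_posSemidef_trace_mul_eq [DecidableEq ι] (f : Matrix ι ι ℝ →ₗ[ℝ] ℝ)
    (hf : ∀ x, 0 ≤ f (vecMulVec x x)) :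
    ∃ X : Matrix ι ι ℝ, X.PosSemidef ∧ ∀ M, M.IsSymm → (M * X).trace = f M := by
  obtain ⟨Y, hY⟩ := exists_trace_mul_eq f
  have hX : ∀ M : Matrix ι ι ℝ, M.IsSymm → (M * ((2 : ℝ)⁻¹ • (Y + Yᵀ))).trace = f M := by
    intro M hM
    rw [Matrix.mul_smul, mul_add, trace_smul, trace_add, trace_mul_transpose_of_isSymm hM, ← hY,
      smul_eq_mul]
    ring
  refine ⟨(2 : ℝ)⁻¹ • (Y + Yᵀ), .of_dotProduct_mulVec_nonneg ?_ fun x => ?_, hX⟩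
  · rw [isHermitian_iff_isSymm, IsSymm, transpose_smul, transpose_add, transpose_transpose,
      add_comm]
  · rw [star_trivial, ← trace_mul_vecMulVec_self, trace_mul_comm,
      hX _ (transpose_vecMulVec x x)]
    exact hf x

lemma exists_posSemidef_ne_zero_trace_mul_eq_zero {κ : Type*} [Fintype κ]
    (A : κ → Matrix ι ι ℝ) (hA : ∀ i, (A i).IsSymm)
    (h : ∀ t : κ → ℝ, ¬ (∑ i, t i • A i).PosDef) :
    ∃ X : Matrix ι ι ℝ, X.PosSemidef ∧ X ≠ 0 ∧ ∀ i, (A i * X).trace = 0 := by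
  classical
  set V := Submodule.span ℝ (Set.range A)
  have hdisj : Disjoint (posDefCone ι) V := by
    refine Set.disjoint_right.mpr fun M hMV hM => ?_
    obtain ⟨t, rfl⟩ := (Submodule.mem_span_range_iff_exists_fun ℝ).mp hMV
    refine h t (posDef_of_mem_posDefCone ?_ hM)
    simp only [IsSymm, transpose_sum, transpose_smul, (hA _).eq]
  obtain ⟨f, u, hfu, huf⟩ :=
    geometric_hahn_banach_open convex_posDefCone isOpen_posDefCone V.convex hdisj
  have hu : u ≤ 0 := by simpa using huf 0 V.zero_mem
  have hfV : ∀ M ∈ V, f M = 0 := by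
    intro M hM
    by_contra hfM
    have := huf _ (V.smul_mem ((u - 1) / f M) hM)
    rw [map_smul, smul_eq_mul, div_mul_cancel₀ _ hfM] at this
    linarith
  have hfneg : ∀ M ∈ posDefCone ι, f M < 0 := fun M hM => (hfu M hM).trans_le hu
  have hf1 : f 1 < 0 :=
    hfneg 1 (by simpa using PosSemidef.zero.add_smul_one_mem_posDefCone one_pos)
  have hfrank : ∀ x, f (vecMulVec x x) ≤ 0 := by
    intro x
    -- if `f (xxᵀ) > 0`, then `xxᵀ + ε • 1` with `ε = -f (xxᵀ) / f 1 > 0` lies in the cone,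
    -- yet `f` vanishes on it
    by_contra! hpos
    have := hfneg _ ((posSemidef_vecMulVec_self_star x).add_smul_one_mem_posDefCone
      (div_pos_of_neg_of_neg (neg_neg_of_pos hpos) hf1))
    rw [star_trivial, map_add, map_smul, smul_eq_mul, div_mul_cancel₀ _ hf1.ne] at this
    linarith
  obtain ⟨X, hX, hXf⟩ := exists_posSemidef_trace_mul_eq (-(f : Matrix ι ι ℝ →ₗ[ℝ] ℝ))
    fun x => by simpa using hfrank x
  refine ⟨X, hX, fun hX0 => ?_, fun i => ?_⟩
  · have := hXf 1 isSymm_one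
    simp [hX0] at this
    linarith
  · simp [hXf _ (hA i), hfV _ (Submodule.subset_span ⟨i, rfl⟩)]

end Matrix

/-- (Bohnenblust) Let `A₁, …, Aₘ ∈ 𝕊ⁿ`. The set
`{X ∈ 𝕊₊ⁿ : Tr(Aᵢ X) = 0, i = 1, …, m}` equals `{0}` if and only if the linear span of
`A₁, …, Aₘ` contains a positive definite matrix. -/
theorem psd_kernel_trivial_iff_posdef_in_span (n m : ℕ)
    (A : Fin m → Matrix (Fin n) (Fin n) ℝ) (hA : ∀ i, (A i).IsSymm) :
    {X : Matrix (Fin n) (Fin n) ℝ | X.PosSemidef ∧ ∀ i, (A i * X).trace = 0} = {0} ↔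
      ∃ t : Fin m → ℝ, (∑ i, t i • A i).PosDef := by
  constructor
  · intro hker
    by_contra! h
    obtain ⟨X, hX, hX0, htr⟩ := exists_posSemidef_ne_zero_trace_mul_eq_zero A hA h
    exact hX0 (hker.subset ⟨hX, htr⟩)
  · rintro ⟨t, ht⟩
    refine Set.eq_singleton_iff_unique_mem.mpr ⟨⟨.zero, by simp⟩, fun X ⟨hX, htr⟩ => ?_⟩
    exact hX.eq_zero_of_trace_mul_eq_zero ht (by simp [Finset.sum_mul, trace_sum, htr])
end

section
/- (Schoenberg) Let n ≥ 1, r ≥ 1, let D ∈ 𝕊ⁿ be a symmetric matrix, and let V = Iₙ − (1/n)·𝟏𝟏ᵀ. Then there exist points x₁,…,xₙ ∈ ℝ^r with D_{ij} = ‖xᵢ − xⱼ‖² for all i, j if and only if the following three conditions hold: (i) D_{ii} = 0 for all i = 1,…,n; (ii) −V D V is positive semidefinite; (iii) rank(V D V) ≤ r. -/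
/-!
Write `V` for the centering matrix: it annihilates `𝟏` and fixes every vector with coordinate
sum zero, in particular `eᵢ - eⱼ`. If `D i j = ‖xᵢ - xⱼ‖²` then `D = a𝟏ᵀ + 𝟏aᵀ - 2G` with `G`
the Gram matrix of the points and `aᵢ = ‖xᵢ‖²`, so `-VDV = 2VGV` is positive semidefinite of rank
at most `rank G ≤ r`. Conversely, a positive semidefinite matrix of rank at most `r` is the Gram
matrix of points of `ℝʳ` (the columns of its square root span a space of dimension `≤ r`, which
embeds isometrically into `ℝʳ`). Applied to `B = -½VDV` this gives points with
`‖xᵢ - xⱼ‖² = (eᵢ - eⱼ)ᵀB(eᵢ - eⱼ) = -½(eᵢ - eⱼ)ᵀD(eᵢ - eⱼ) = Dᵢⱼ`.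
-/

open Matrix Module

noncomputable def centeringMatrix (ι : Type*) [Fintype ι] [DecidableEq ι] : Matrix ι ι ℝ :=
  1 - (1 / (Fintype.card ι : ℝ)) • vecMulVec 1 1

section Centering

variable {ι : Type*} [Fintype ι] [DecidableEq ι]

theorem centeringMatrix_transpose : (centeringMatrix ι)ᵀ = centeringMatrix ι := by
  rw [centeringMatrix, transpose_sub, transpose_smul, transpose_one, transpose_vecMulVec]

theorem centeringMatrix_mulVec (w : ι → ℝ) :
    centeringMatrix ι *ᵥ w = w - (1 / (Fintype.card ι : ℝ) * ∑ i, w i) • 1 := by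
  rw [centeringMatrix, sub_mulVec, one_mulVec, smul_mulVec, vecMulVec_mulVec, one_dotProduct]
  ext
  simp [mul_comm]

theorem centeringMatrix_mulVec_one : centeringMatrix ι *ᵥ 1 = 0 := by
  cases isEmpty_or_nonempty ι
  · exact Subsingleton.elim _ _
  · simp [centeringMatrix_mulVec]

theorem one_vecMul_centeringMatrix : 1 ᵥ* centeringMatrix ι = 0 := by
  rw [← centeringMatrix_transpose, vecMul_transpose, centeringMatrix_mulVec_one]

theorem centeringMatrix_mulVec_of_sum_eq_zero {w : ι → ℝ} (hw : ∑ i, w i = 0) :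
    centeringMatrix ι *ᵥ w = w := by
  simp [centeringMatrix_mulVec, hw]

theorem vecMul_centeringMatrix_of_sum_eq_zero {w : ι → ℝ} (hw : ∑ i, w i = 0) :
    w ᵥ* centeringMatrix ι = w := by
  rw [← centeringMatrix_transpose, vecMul_transpose, centeringMatrix_mulVec_of_sum_eq_zero hw]

theorem vecMulVec_one_mul_centeringMatrix (a : ι → ℝ) :
    vecMulVec a 1 * centeringMatrix ι = 0 := by
  rw [vecMulVec_mul, one_vecMul_centeringMatrix]
  simp

theorem centeringMatrix_mul_vecMulVec_one (a : ι → ℝ) :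
    centeringMatrix ι * vecMulVec 1 a = 0 := by
  rw [mul_vecMulVec, centeringMatrix_mulVec_one]
  simp

theorem dotProduct_mulVec_single_sub_single {R : Type*} [CommRing R] (M : Matrix ι ι R)
    (i j : ι) :
    (Pi.single i 1 - Pi.single j 1) ⬝ᵥ M *ᵥ (Pi.single i 1 - Pi.single j 1) =
      M i i + M j j - M i j - M j i := by
  simp only [mulVec_sub, mulVec_single, MulOpposite.op_one, one_smul, dotProduct_sub,
    sub_dotProduct, single_dotProduct, col_apply, one_mul]
  ring

end Centering

section Gram

variable {ι : Type*} [Fintype ι]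

theorem rank_gram_le_finrank {𝕜 E : Type*} [RCLike 𝕜] [NormedAddCommGroup E]
    [InnerProductSpace 𝕜 E] [FiniteDimensional 𝕜 E] (v : ι → E) :
    (gram 𝕜 v).rank ≤ finrank 𝕜 E := by
  rw [gram_eq_conjTranspose_mul (stdOrthonormalBasis 𝕜 E) v]
  exact (rank_mul_le_right _ _).trans ((rank_le_card_height _).trans (by simp))

theorem norm_sub_sq_eq_dotProduct_gram_mulVec [DecidableEq ι] {E : Type*}
    [NormedAddCommGroup E] [InnerProductSpace ℝ E] (x : ι → E) (i j : ι) :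
    ‖x i - x j‖ ^ 2 =
      (Pi.single i 1 - Pi.single j 1) ⬝ᵥ gram ℝ x *ᵥ (Pi.single i 1 - Pi.single j 1) := by
  have hcomb : ∑ k, (Pi.single i 1 - Pi.single j 1 : ι → ℝ) k • x k = x i - x j := by
    simp [sub_smul, Finset.sum_sub_distrib, Pi.single_apply]
  rw [← star_trivial (Pi.single i 1 - Pi.single j 1 : ι → ℝ), star_dotProduct_gram_mulVec,
    star_trivial, hcomb, real_inner_self_eq_norm_sq]

theorem exists_linearIsometry_of_finrank_le {F E : Type*} [NormedAddCommGroup F]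
    [InnerProductSpace ℝ F] [FiniteDimensional ℝ F] [NormedAddCommGroup E]
    [InnerProductSpace ℝ E] [FiniteDimensional ℝ E] (h : finrank ℝ F ≤ finrank ℝ E) :
    Nonempty (F →ₗᵢ[ℝ] E) := by
  let b := stdOrthonormalBasis ℝ F
  let c := stdOrthonormalBasis ℝ E
  have hc : Orthonormal ℝ (c ∘ Fin.castLE h) := c.orthonormal.comp _ (Fin.castLE_injective h)
  have hbasis : b.toBasis.constr ℝ (c ∘ Fin.castLE h) ∘ b.toBasis = c ∘ Fin.castLE h :=
    funext (b.toBasis.constr_basis ℝ _)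
  exact ⟨LinearMap.isometryOfOrthonormal _ b.orthonormal (hbasis ▸ hc)⟩

theorem exists_gram_eq_transpose_mul_self {m E : Type*} [Fintype m] [NormedAddCommGroup E]
    [InnerProductSpace ℝ E] [FiniteDimensional ℝ E] (C : Matrix m ι ℝ)
    (hC : C.rank ≤ finrank ℝ E) : ∃ v : ι → E, gram ℝ v = Cᵀ * C := by
  let w : ι → EuclideanSpace ℝ m := fun i => WithLp.toLp 2 (C.col i)
  have hfinrank : finrank ℝ (Submodule.span ℝ (Set.range w)) = C.rank := by
    rw [rank_eq_finrank_span_cols, ← LinearEquiv.finrank_map_eq (WithLp.linearEquiv 2 ℝ (m → ℝ)),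
      Submodule.map_span, ← Set.range_comp]
    rfl
  obtain ⟨φ⟩ := exists_linearIsometry_of_finrank_le (F := Submodule.span ℝ (Set.range w)) (E := E)
    (hfinrank ▸ hC)
  refine ⟨fun i => φ ⟨w i, Submodule.subset_span (Set.mem_range_self i)⟩, ?_⟩
  ext i j
  simp [gram_apply, LinearIsometry.inner_map_map, mul_apply, w, PiLp.inner_apply, mul_comm]

open scoped MatrixOrder in
theorem Matrix.PosSemidef.exists_eq_transpose_mul_self [DecidableEq ι] {B : Matrix ι ι ℝ}
    (hB : B.PosSemidef) : ∃ C : Matrix ι ι ℝ, B = Cᵀ * C := by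
  have hB0 : 0 ≤ B := nonneg_iff_posSemidef.mpr hB
  refine ⟨CFC.sqrt B, ?_⟩
  rw [← conjTranspose_eq_transpose_of_trivial, ← star_eq_conjTranspose,
    (CFC.sqrt_nonneg B).isSelfAdjoint.star_eq, CFC.sqrt_mul_sqrt_self B hB0]

theorem Matrix.PosSemidef.exists_gram_eq [DecidableEq ι] {E : Type*} [NormedAddCommGroup E]
    [InnerProductSpace ℝ E] [FiniteDimensional ℝ E] {B : Matrix ι ι ℝ} (hB : B.PosSemidef)
    (hrank : B.rank ≤ finrank ℝ E) : ∃ v : ι → E, gram ℝ v = B := by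
  obtain ⟨C, rfl⟩ := hB.exists_eq_transpose_mul_self
  rw [rank_transpose_mul_self] at hrank
  exact exists_gram_eq_transpose_mul_self C hrank

end Gram

section EuclideanDistanceMatrix

variable {ι E : Type*} [Fintype ι] [DecidableEq ι] [NormedAddCommGroup E] [InnerProductSpace ℝ E]

theorem centeringMatrix_mul_mul_eq_neg_two_smul_gram {D : Matrix ι ι ℝ} {x : ι → E}
    (hx : ∀ i j, D i j = ‖x i - x j‖ ^ 2) :
    centeringMatrix ι * D * centeringMatrix ι =
      -(2 : ℝ) • (centeringMatrix ι * gram ℝ x * centeringMatrix ι) := by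
  set a : ι → ℝ := fun i => ‖x i‖ ^ 2
  have hD : D = vecMulVec a 1 + vecMulVec 1 a - (2 : ℝ) • gram ℝ x := by
    ext i j
    simp only [hx, norm_sub_sq_real, vecMulVec_one, one_vecMulVec, Matrix.sub_apply,
      Matrix.add_apply, replicateCol_apply, replicateRow_apply, Matrix.smul_apply, gram_apply,
      smul_eq_mul, a]
    ring
  have h₁ : centeringMatrix ι * vecMulVec a 1 * centeringMatrix ι = 0 := by
    rw [Matrix.mul_assoc, vecMulVec_one_mul_centeringMatrix, Matrix.mul_zero]
  have h₂ : centeringMatrix ι * vecMulVec 1 a * centeringMatrix ι = 0 := by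
    rw [centeringMatrix_mul_vecMulVec_one, Matrix.zero_mul]
  rw [hD, Matrix.mul_sub, Matrix.mul_add, Matrix.sub_mul, Matrix.add_mul, h₁, h₂, zero_add,
    zero_sub, mul_smul_comm, smul_mul_assoc, neg_smul]

theorem posSemidef_neg_centeringMatrix_mul_mul_of_eq_norm_sub_sq {D : Matrix ι ι ℝ}
    {x : ι → E} (hx : ∀ i j, D i j = ‖x i - x j‖ ^ 2) :
    (-(centeringMatrix ι * D * centeringMatrix ι)).PosSemidef := by
  have hpsd := (posSemidef_gram ℝ x).conjTranspose_mul_mul_same (centeringMatrix ι)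
  rw [conjTranspose_eq_transpose_of_trivial, centeringMatrix_transpose] at hpsd
  rw [centeringMatrix_mul_mul_eq_neg_two_smul_gram hx, neg_smul, neg_neg]
  exact hpsd.smul zero_le_two

theorem rank_centeringMatrix_mul_mul_le_of_eq_norm_sub_sq [FiniteDimensional ℝ E]
    {D : Matrix ι ι ℝ} {x : ι → E} (hx : ∀ i j, D i j = ‖x i - x j‖ ^ 2) :
    (centeringMatrix ι * D * centeringMatrix ι).rank ≤ finrank ℝ E :=
  calc (centeringMatrix ι * D * centeringMatrix ι).rank
      = ((-(2 : ℝ)) • centeringMatrix ι * gram ℝ x * centeringMatrix ι).rank := by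
        rw [centeringMatrix_mul_mul_eq_neg_two_smul_gram hx, smul_mul_assoc, smul_mul_assoc]
    _ ≤ (gram ℝ x).rank := (rank_mul_le_left _ _).trans (rank_mul_le_right _ _)
    _ ≤ finrank ℝ E := rank_gram_le_finrank x

theorem exists_eq_norm_sub_sq_of_posSemidef_neg_centeringMatrix_mul_mul [FiniteDimensional ℝ E]
    {D : Matrix ι ι ℝ} (hD : D.IsSymm) (hdiag : ∀ i, D i i = 0)
    (hpsd : (-(centeringMatrix ι * D * centeringMatrix ι)).PosSemidef)
    (hrank : (centeringMatrix ι * D * centeringMatrix ι).rank ≤ finrank ℝ E) :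
    ∃ x : ι → E, ∀ i j, D i j = ‖x i - x j‖ ^ 2 := by
  have hBrank : ((1 / 2 : ℝ) • -(centeringMatrix ι * D * centeringMatrix ι)).rank ≤
      finrank ℝ E := by
    rwa [smul_neg, ← neg_smul, rank_smul_of_mem_nonZeroDivisors _
      (mem_nonZeroDivisors_of_ne_zero (by norm_num))]
  obtain ⟨x, hx⟩ := (hpsd.smul (by norm_num : (0 : ℝ) ≤ 1 / 2)).exists_gram_eq (E := E) hBrank
  refine ⟨x, fun i j => ?_⟩
  set w : ι → ℝ := Pi.single i 1 - Pi.single j 1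
  have hw : ∑ k, w k = 0 := by simp [w]
  have hquad : w ⬝ᵥ (centeringMatrix ι * D * centeringMatrix ι) *ᵥ w = w ⬝ᵥ D *ᵥ w := by
    rw [← mulVec_mulVec, ← mulVec_mulVec, centeringMatrix_mulVec_of_sum_eq_zero hw,
      dotProduct_mulVec, vecMul_centeringMatrix_of_sum_eq_zero hw]
  rw [norm_sub_sq_eq_dotProduct_gram_mulVec, hx, smul_mulVec, dotProduct_smul, neg_mulVec,
    dotProduct_neg, hquad, dotProduct_mulVec_single_sub_single, hdiag, hdiag, hD.apply i j,
    smul_eq_mul]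
  ring

theorem exists_eq_norm_sub_sq_iff [FiniteDimensional ℝ E] {D : Matrix ι ι ℝ} (hD : D.IsSymm) :
    (∃ x : ι → E, ∀ i j, D i j = ‖x i - x j‖ ^ 2) ↔
      (∀ i, D i i = 0) ∧ (-(centeringMatrix ι * D * centeringMatrix ι)).PosSemidef ∧
        (centeringMatrix ι * D * centeringMatrix ι).rank ≤ finrank ℝ E :=
  ⟨fun ⟨_, hx⟩ => ⟨fun i => by simp [hx],
      posSemidef_neg_centeringMatrix_mul_mul_of_eq_norm_sub_sq hx,
      rank_centeringMatrix_mul_mul_le_of_eq_norm_sub_sq hx⟩,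
    fun ⟨hdiag, hpsd, hrank⟩ =>
      exists_eq_norm_sub_sq_of_posSemidef_neg_centeringMatrix_mul_mul hD hdiag hpsd hrank⟩

end EuclideanDistanceMatrix

theorem schoenberg_edm_characterization_general (n r : ℕ)
    (D : Matrix (Fin n) (Fin n) ℝ) (hD : D.IsSymm)
    (V : Matrix (Fin n) (Fin n) ℝ)
    (hV : V = 1 - (1 / (n : ℝ)) • vecMulVec (fun _ => 1) (fun _ => 1)) :
    (∃ x : Fin n → EuclideanSpace ℝ (Fin r), ∀ i j, D i j = ‖x i - x j‖ ^ 2) ↔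
      ((∀ i, D i i = 0) ∧ (-(V * D * V)).PosSemidef ∧ (V * D * V).rank ≤ r) := by
  have hV' : V = centeringMatrix (Fin n) := by
    rw [hV, centeringMatrix, Fintype.card_fin]
    rfl
  subst hV'
  simpa only [finrank_euclideanSpace_fin] using
    exists_eq_norm_sub_sq_iff (E := EuclideanSpace ℝ (Fin r)) hD

/-- (Schoenberg) Let `n ≥ 1`, `r ≥ 1`, `D ∈ 𝕊ⁿ` symmetric, and `V = Iₙ − (1/n)·𝟏𝟏ᵀ`. Then
there exist points `x₁, …, xₙ ∈ ℝ^r` with `D_{ij} = ‖xᵢ − xⱼ‖²` for all `i, j` iff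
(i) `D_{ii} = 0` for all `i`; (ii) `−V D V` is positive semidefinite; and
(iii) `rank(V D V) ≤ r`. -/
theorem schoenberg_edm_characterization (n r : ℕ) (hn : 1 ≤ n) (hr : 1 ≤ r)
    (D : Matrix (Fin n) (Fin n) ℝ) (hD : D.IsSymm)
    (V : Matrix (Fin n) (Fin n) ℝ)
    (hV : V = 1 - (1 / (n : ℝ)) • vecMulVec (fun _ => 1) (fun _ => 1)) :
    (∃ x : Fin n → EuclideanSpace ℝ (Fin r), ∀ i j, D i j = ‖x i - x j‖ ^ 2) ↔
      ((∀ i, D i i = 0) ∧ (-(V * D * V)).PosSemidef ∧ (V * D * V).rank ≤ r) :=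
  schoenberg_edm_characterization_general n r D hD V hV
end
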